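/- arXiv:1804.03584 — 3 statements merged into one kernel-verified Lean document; each statement's English description precedes it below -/
import Mathlib

section
/- The necessary coefficient conditions Im(γ_{kl}^{m'} conj(γ_{k'l'})^m) = 0 are not sufficient for reflection symmetry in general: the polynomial f(z, z̄) = z³ + i z z̄² satisfies these conditions for its pair of monomials (both have winding number 2 or compatible relations) but is not reflection-symmetric with respect to any axis, i.e., there is no θ with e^{2iθ} conj(f(z,z̄)) = f(e^{2iθ} z̄, e^{−2iθ} z) for all z. -/
/-!
Write `a = e^{2iθ}` and `b = e^{-2iθ}`, so that `a b = 1`. Since `f` is a sum of the monomials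
`z³` and `z z̄²`, the symmetry condition at `z` reads `(a - a³) z̄³ = i (a + b) z̄ z²`. At `z = 1`
both monomials equal `1`, while at `z = 1 + i` they are opposite (their winding numbers differ
by `4`), so both coefficients vanish: `a³ = a` and `b = -a`. Then `a b = -a² = -1`.
-/

open Complex ComplexConjugate

section

variable {a b : ℂ}

theorem reflect_cubic_iff (hab : a * b = 1) (z : ℂ) :
    a * conj (z ^ 3 + I * z * conj z ^ 2) = (a * conj z) ^ 3 + I * (a * conj z) * (b * z) ^ 2 ↔
      (a - a ^ 3) * conj z ^ 3 = I * (a + b) * (conj z * z ^ 2) := by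
  simp only [map_add, map_mul, map_pow, conj_I, conj_conj]
  constructor <;> intro h
  · linear_combination h + I * b * conj z * z ^ 2 * hab
  · linear_combination h - I * b * conj z * z ^ 2 * hab

theorem cube_eq_self_and_add_eq_zero
    (h : ∀ z : ℂ, (a - a ^ 3) * conj z ^ 3 = I * (a + b) * (conj z * z ^ 2)) :
    a ^ 3 = a ∧ a + b = 0 := by
  have at_one := h 1
  have at_one_add_I := h (1 + I)
  have hcube : conj (1 + I) ^ 3 = -(2 + 2 * I) := by
    simp only [map_add, map_one, conj_I]
    linear_combination (3 - I) * I_sq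
  have hmixed : conj (1 + I) * (1 + I) ^ 2 = 2 + 2 * I := by
    simp only [map_add, map_one, conj_I]
    linear_combination -(1 + I) * I_sq
  rw [hcube, hmixed] at at_one_add_I
  simp only [map_one, one_pow, mul_one] at at_one
  have hsum : I * (a + b) * (2 * (2 + 2 * I)) = 0 := by
    linear_combination -((2 + 2 * I) * at_one + at_one_add_I)
  have hc : (2 + 2 * I : ℂ) ≠ 0 := by simp [Complex.ext_iff]
  have hb : a + b = 0 := by simpa [I_ne_zero, hc] using hsum
  exact ⟨by linear_combination -at_one - I * hb, hb⟩

theorem mul_ne_one_of_cube_eq_self_of_add_eq_zero (h3 : a ^ 3 = a) (hb : a + b = 0) :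
    a * b ≠ 1 := by
  intro hab
  have hsq : a ^ 2 = -1 := by linear_combination a * hb - hab
  have ha : a = 0 := by linear_combination (-1 / 2) * h3 + (a / 2) * hsq
  simp [ha] at hab

end

/-- The coefficient conditions `Im(γ_{kl}^{m'} conj(γ_{k'l'})^m) = 0` are not
sufficient for reflection symmetry: `f(z,z̄) = z³ + i z z̄²` (coefficients
`γ₃₀ = 1` with winding number `2`, `γ₁₂ = i` with winding number `−2`)
satisfies them but is reflection-symmetric with respect to no axis. -/
theorem coeff_conditions_not_sufficient :
    (((1 : ℂ) ^ (-2 : ℤ) * (starRingEnd ℂ Complex.I) ^ (2 : ℤ)).im = 0 ∧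
     ((Complex.I : ℂ) ^ (2 : ℤ) * (starRingEnd ℂ (1 : ℂ)) ^ (-2 : ℤ)).im = 0) ∧
    ¬ ∃ θ : ℝ, ∀ z : ℂ,
        Complex.exp (2 * Complex.I * θ) *
          starRingEnd ℂ (z ^ 3 + Complex.I * z * (starRingEnd ℂ z) ^ 2)
        = (Complex.exp (2 * Complex.I * θ) * starRingEnd ℂ z) ^ 3
          + Complex.I * (Complex.exp (2 * Complex.I * θ) * starRingEnd ℂ z)
            * (Complex.exp (-(2 * Complex.I * θ)) * z) ^ 2 := by
  refine ⟨by simp, ?_⟩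
  rintro ⟨θ, h⟩
  have hab : exp (2 * I * θ) * exp (-(2 * I * θ)) = 1 := by rw [← exp_add, add_neg_cancel, exp_zero]
  obtain ⟨h3, hb⟩ := cube_eq_self_and_add_eq_zero fun z => (reflect_cubic_iff hab z).mp (h z)
  exact mul_ne_one_of_cube_eq_self_of_add_eq_zero h3 hb hab
end

section
/- Let V be a finite-dimensional complex vector space with basis u₁,…,u_p, v₁,…,v_q and let f : V → V be the ℂ-linear map with f(u_i) = λ u_i and f(v_j) = λ̄ v_j for a fixed λ ∈ ℂ \ ℝ. Then every irreducible f-invariant real subspace of the realification V_ℝ is two-dimensional and of the form S_{(α:β)} = { γ Σᵢ αᵢ uᵢ + γ̄ Σⱼ conj(βⱼ) vⱼ : γ ∈ ℂ } for some (α₁,…,α_p, β₁,…,β_q) ∈ ℂ^{p+q} \ {0}; moreover S_{(α:β)} = S_{(α':β')} iff (α,β) and (α',β') are proportional over ℂ, and distinct such subspaces intersect trivially. -/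
/-!
Write a vector as `b.equivFun.symm d` and conjugate the coordinates of the `v`-block: then the
points of `S_c` are the vectors whose twisted coordinates are `γ • c`, so
`γ ↦ γ Σ cᵢ uᵢ + γ̄ Σ c̄ⱼ vⱼ` is an injective `ℝ`-linear map `ℂ → V` (for `c ≠ 0`) which turns
multiplication by `λ` into `f`. Every vector `x` lies in some `S_c`, which is then `f`-invariant
and, because `1` and `λ` span `ℂ` over `ℝ`, contained in every invariant subspace through `x`;
hence an irreducible `W ∋ x` equals `S_c ≅ ℂ`. Comparing twisted coordinates, `S_c` and `S_c'`
share the point with parameters `γ`, `γ'` iff `γ • c = γ' • c'`, which gives both the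
proportionality criterion and the trivial intersections.
-/

open Complex

/-- The real subspace `S_{(α:β)} = {γ Σ αᵢ uᵢ + γ̄ Σ conj(βⱼ) vⱼ : γ ∈ ℂ}`
associated to a coefficient vector `c = (α, β)`. -/
def Scarrier {p q : ℕ} {V : Type*} [AddCommGroup V] [Module ℂ V]
    (b : Module.Basis (Fin p ⊕ Fin q) ℂ V) (c : Fin p ⊕ Fin q → ℂ) : Set V :=
  {x | ∃ γ : ℂ,
    x = γ • (∑ i : Fin p, c (Sum.inl i) • b (Sum.inl i))
        + (starRingEnd ℂ γ) • (∑ j : Fin q, (starRingEnd ℂ (c (Sum.inr j))) • b (Sum.inr j))}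

theorem Complex.span_one_eq_top_of_im_ne_zero {lam : ℂ} (hlam : lam.im ≠ 0) :
    Submodule.span ℝ {1, lam} = ⊤ := by
  refine Submodule.eq_top_iff'.mpr fun γ => Submodule.mem_span_pair.mpr ?_
  refine ⟨γ.re - γ.im / lam.im * lam.re, γ.im / lam.im, Complex.ext ?_ ?_⟩
  · simp
  · simp [div_mul_cancel₀ _ hlam]

open ComplexConjugate

section
variable {ι κ : Type*}

def conjInr : (ι ⊕ κ → ℂ) ≃ₗ[ℝ] (ι ⊕ κ → ℂ) where
  toFun d := Sum.elim (fun i => d (.inl i)) (fun j => conj (d (.inr j)))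
  invFun d := Sum.elim (fun i => d (.inl i)) (fun j => conj (d (.inr j)))
  map_add' d e := by ext (i | j) <;> simp
  map_smul' r d := by ext (i | j) <;> simp [Complex.real_smul]
  left_inv d := by ext (i | j) <;> simp
  right_inv d := by ext (i | j) <;> simp

@[simp] lemma conjInr_inl (d : ι ⊕ κ → ℂ) (i : ι) : conjInr d (.inl i) = d (.inl i) := rfl

@[simp] lemma conjInr_inr (d : ι ⊕ κ → ℂ) (j : κ) : conjInr d (.inr j) = conj (d (.inr j)) := rfl

lemma conjInr_conjInr (d : ι ⊕ κ → ℂ) : conjInr (conjInr d) = d := conjInr.left_inv d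

variable [Fintype ι] [Fintype κ] {V : Type*} [AddCommGroup V] [Module ℂ V]

/-- `γ ↦ γ Σ cᵢ uᵢ + γ̄ Σ c̄ⱼ vⱼ`, whose range is `S_c` (`coe_range_sParam`). -/
noncomputable def sParam (b : Module.Basis (ι ⊕ κ) ℂ V) (c : ι ⊕ κ → ℂ) : ℂ →ₗ[ℝ] V :=
  (b.equivFun.symm.restrictScalars ℝ).toLinearMap ∘ₗ conjInr.toLinearMap ∘ₗ
    (LinearMap.toSpanSingleton ℂ _ c).restrictScalars ℝ

variable (b : Module.Basis (ι ⊕ κ) ℂ V) {lam : ℂ} {f : V →ₗ[ℂ] V}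
  (hfu : ∀ i, f (b (.inl i)) = lam • b (.inl i))
  (hfv : ∀ j, f (b (.inr j)) = conj lam • b (.inr j))

lemma sParam_apply (c : ι ⊕ κ → ℂ) (γ : ℂ) :
    sParam b c γ = b.equivFun.symm (conjInr (γ • c)) := rfl

lemma sParam_eq_sParam_iff {c c' : ι ⊕ κ → ℂ} {γ γ' : ℂ} :
    sParam b c γ = sParam b c' γ' ↔ γ • c = γ' • c' := by
  simp only [sParam_apply, b.equivFun.symm.injective.eq_iff, conjInr.injective.eq_iff]

lemma sParam_injective {c : ι ⊕ κ → ℂ} (hc : c ≠ 0) : Function.Injective (sParam b c) :=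
  fun _ _ h => smul_left_injective ℂ hc ((sParam_eq_sParam_iff b).mp h)

lemma sParam_smul (c : ι ⊕ κ → ℂ) (μ γ : ℂ) : sParam b (μ • c) γ = sParam b c (γ * μ) := by
  rw [sParam_eq_sParam_iff, mul_smul]

lemma exists_sParam_one_eq (x : V) : ∃ c, sParam b c 1 = x :=
  ⟨conjInr (b.equivFun x), by simp [sParam_apply, conjInr_conjInr]⟩

include hfu hfv in
lemma sParam_map (c : ι ⊕ κ → ℂ) (γ : ℂ) :
    f (sParam b c γ) = sParam b c (lam * γ) := by
  simp only [sParam_apply, Module.Basis.equivFun_symm_apply, Fintype.sum_sum_type, map_add,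
    map_sum, map_smul, hfu, hfv, smul_smul, conjInr_inl, conjInr_inr, Pi.smul_apply,
    smul_eq_mul, map_mul]
  congr 1 <;> exact Finset.sum_congr rfl fun _ _ => by ring_nf

lemma range_sParam_eq_range_iff {c c' : ι ⊕ κ → ℂ} (hc : c ≠ 0) :
    LinearMap.range (sParam b c) = LinearMap.range (sParam b c') ↔
      ∃ μ : ℂ, μ ≠ 0 ∧ c' = μ • c := by
  constructor
  · intro h
    obtain ⟨γ, hγ⟩ : sParam b c 1 ∈ LinearMap.range (sParam b c') := h ▸ ⟨1, rfl⟩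
    rw [sParam_eq_sParam_iff, one_smul] at hγ
    have hγ0 : γ ≠ 0 := by rintro rfl; exact hc (by simp [← hγ])
    exact ⟨γ⁻¹, inv_ne_zero hγ0, by rw [← hγ, inv_smul_smul₀ hγ0]⟩
  · rintro ⟨μ, hμ, rfl⟩
    ext x
    simp only [LinearMap.mem_range, sParam_smul]
    exact ⟨fun ⟨γ, hγ⟩ => ⟨γ * μ⁻¹, by rwa [inv_mul_cancel_right₀ hμ]⟩,
      fun ⟨γ, hγ⟩ => ⟨γ * μ, hγ⟩⟩

lemma range_sParam_inf_range_eq_bot {c c' : ι ⊕ κ → ℂ} (hc' : c' ≠ 0)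
    (h : ¬∃ μ : ℂ, μ ≠ 0 ∧ c' = μ • c) :
    LinearMap.range (sParam b c) ⊓ LinearMap.range (sParam b c') = ⊥ := by
  refine (Submodule.eq_bot_iff _).mpr ?_
  rintro x ⟨⟨γ, rfl⟩, ⟨δ, hδ⟩⟩
  obtain rfl : δ = 0 := by
    rw [sParam_eq_sParam_iff] at hδ
    by_contra hδ0
    have hγ0 : γ ≠ 0 := by rintro rfl; simp [hδ0, hc'] at hδ
    exact h ⟨δ⁻¹ * γ, mul_ne_zero (inv_ne_zero hδ0) hγ0, by rw [mul_smul, ← hδ, inv_smul_smul₀ hδ0]⟩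
  rw [← hδ, map_zero]

include hfu hfv in
lemma map_mem_range_sParam (c : ι ⊕ κ → ℂ) :
    ∀ x ∈ LinearMap.range (sParam b c), f x ∈ LinearMap.range (sParam b c) := by
  rintro _ ⟨γ, rfl⟩
  exact ⟨lam * γ, (sParam_map b hfu hfv c γ).symm⟩

include hfu hfv in
lemma range_sParam_le (hlam : lam.im ≠ 0) {W : Submodule ℝ V} (hW : ∀ x ∈ W, f x ∈ W)
    {c : ι ⊕ κ → ℂ} (hc : sParam b c 1 ∈ W) : LinearMap.range (sParam b c) ≤ W := by
  rw [LinearMap.range_le_iff_comap, eq_top_iff, ← Complex.span_one_eq_top_of_im_ne_zero hlam,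
    Submodule.span_le]
  rintro γ (rfl | rfl)
  · exact hc
  · simpa [sParam_map b hfu hfv] using hW _ hc

lemma finrank_range_sParam {c : ι ⊕ κ → ℂ} (hc : c ≠ 0) :
    Module.finrank ℝ (LinearMap.range (sParam b c)) = 2 := by
  rw [LinearMap.finrank_range_of_inj (sParam_injective b hc), Complex.finrank_real_complex]

end

lemma coe_range_sParam {p q : ℕ} {V : Type*} [AddCommGroup V] [Module ℂ V]
    (b : Module.Basis (Fin p ⊕ Fin q) ℂ V) (c : Fin p ⊕ Fin q → ℂ) :
    (LinearMap.range (sParam b c) : Set V) = Scarrier b c := by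
  ext x
  simp [Scarrier, sParam_apply, Module.Basis.equivFun_symm_apply, Fintype.sum_sum_type,
    Finset.smul_sum, smul_smul, eq_comm]

/-- Irreducible invariant real subspaces of the realification of a complex
vector space with a basis of `λ`- and `λ̄`-eigenvectors (`λ ∉ ℝ`) are exactly
the two-dimensional subspaces `S_{(α:β)}`; two such subspaces coincide iff the
coefficient vectors are proportional over `ℂ`, and otherwise they intersect
trivially. -/
theorem irreducible_real_invariant_subspaces
    (p q : ℕ) (V : Type*) [AddCommGroup V] [Module ℂ V]
    (b : Module.Basis (Fin p ⊕ Fin q) ℂ V)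
    (lam : ℂ) (hlam : lam.im ≠ 0)
    (f : V →ₗ[ℂ] V)
    (hfu : ∀ i : Fin p, f (b (Sum.inl i)) = lam • b (Sum.inl i))
    (hfv : ∀ j : Fin q, f (b (Sum.inr j)) = (starRingEnd ℂ lam) • b (Sum.inr j)) :
    (∀ W : Submodule ℝ V,
      W ≠ ⊥ →
      (∀ x ∈ W, f x ∈ W) →
      (∀ U : Submodule ℝ V, U ≤ W → (∀ x ∈ U, f x ∈ U) → U = ⊥ ∨ U = W) →
      Module.finrank ℝ W = 2 ∧
        ∃ c : Fin p ⊕ Fin q → ℂ, c ≠ 0 ∧ (W : Set V) = Scarrier b c) ∧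
    (∀ c c' : Fin p ⊕ Fin q → ℂ, c ≠ 0 → c' ≠ 0 →
      (Scarrier b c = Scarrier b c' ↔ ∃ μ : ℂ, μ ≠ 0 ∧ c' = μ • c)) ∧
    (∀ c c' : Fin p ⊕ Fin q → ℂ, c ≠ 0 → c' ≠ 0 →
      (¬ ∃ μ : ℂ, μ ≠ 0 ∧ c' = μ • c) →
      Scarrier b c ∩ Scarrier b c' = {0}) := by
  refine ⟨fun W hW hWf hirr => ?_, fun c c' hc _ => ?_, fun c c' _ hc' hcc' => ?_⟩
  · obtain ⟨x, hxW, hx0⟩ := (Submodule.ne_bot_iff W).mp hW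
    obtain ⟨c, rfl⟩ := exists_sParam_one_eq b x
    have hc : c ≠ 0 := by rintro rfl; simp [sParam_apply] at hx0
    have hS : LinearMap.range (sParam b c) = W :=
      (hirr _ (range_sParam_le b hfu hfv hlam hWf hxW)
        (map_mem_range_sParam b hfu hfv c)).resolve_left
          (LinearMap.range_eq_bot.not.mpr fun h => hx0 (by simp [h]))
    exact ⟨hS ▸ finrank_range_sParam b hc, c, hc, by rw [← hS, coe_range_sParam]⟩
  · rw [← coe_range_sParam, ← coe_range_sParam, SetLike.coe_set_eq]
    exact range_sParam_eq_range_iff b hc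
  · rw [← coe_range_sParam, ← coe_range_sParam, ← Submodule.coe_inf,
      range_sParam_inf_range_eq_bot b hc' hcc', Submodule.bot_coe]
end

section
/- For m ≠ m' with m m' ≠ 0 and |m| ≠ |m'|, the functions F(z) = ((c + z^m)/(c + z^{−m}))^{2m'} and G(z) = ((c + z^{m'})/(c + z^{−m'}))^{2m} (c real, c ≠ −1, c ∉ {0,1} for nondegeneracy) are not identically equal: in fact the third derivatives satisfy (F''' − G''')(1) = −4c(c−1)/(c+1)³ · (m'² − m²) m m' ≠ 0. -/
open Complex

namespace TDD

noncomputable section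

/-- `A c k z = c + z^k` -/
def A (c : ℂ) (k : ℤ) (z : ℂ) : ℂ := c + z ^ k
def A1 (k : ℤ) (z : ℂ) : ℂ := (k : ℂ) * z ^ (k - 1)
def A2 (k : ℤ) (z : ℂ) : ℂ := (k : ℂ) * (((k - 1 : ℤ) : ℂ) * z ^ (k - 1 - 1))
def A3 (k : ℤ) (z : ℂ) : ℂ :=
  (k : ℂ) * (((k - 1 : ℤ) : ℂ) * (((k - 1 - 1 : ℤ) : ℂ) * z ^ (k - 1 - 1 - 1)))

def P (c : ℂ) (k : ℤ) (z : ℂ) : ℂ :=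
  A1 k z * A c (-k) z - A c k z * A1 (-k) z
def P1 (c : ℂ) (k : ℤ) (z : ℂ) : ℂ :=
  (A2 k z * A c (-k) z + A1 k z * A1 (-k) z) -
    (A1 k z * A1 (-k) z + A c k z * A2 (-k) z)
def P2 (c : ℂ) (k : ℤ) (z : ℂ) : ℂ :=
  ((A3 k z * A c (-k) z + A2 k z * A1 (-k) z) + (A2 k z * A1 (-k) z + A1 k z * A2 (-k) z)) -
    ((A2 k z * A1 (-k) z + A1 k z * A2 (-k) z) + (A1 k z * A2 (-k) z + A c k z * A3 (-k) z))

def Q (c : ℂ) (k : ℤ) (z : ℂ) : ℂ := A c k z / A c (-k) z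

def R (c : ℂ) (k : ℤ) (z : ℂ) : ℂ := A c k z * A c (-k) z
def R1 (c : ℂ) (k : ℤ) (z : ℂ) : ℂ := A1 k z * A c (-k) z + A c k z * A1 (-k) z
def R2 (c : ℂ) (k : ℤ) (z : ℂ) : ℂ :=
  (A2 k z * A c (-k) z + A1 k z * A1 (-k) z) + (A1 k z * A1 (-k) z + A c k z * A2 (-k) z)

/-- logarithmic derivative `Q'/Q` of `Q` -/
def M (c : ℂ) (k : ℤ) (z : ℂ) : ℂ := P c k z / R c k z
def M1 (c : ℂ) (k : ℤ) (z : ℂ) : ℂ :=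
  (P1 c k z * R c k z - P c k z * R1 c k z) / R c k z ^ 2
def M2 (c : ℂ) (k : ℤ) (z : ℂ) : ℂ :=
  (((P2 c k z * R c k z + P1 c k z * R1 c k z) - (P1 c k z * R1 c k z + P c k z * R2 c k z)) *
      R c k z ^ 2 -
    (P1 c k z * R c k z - P c k z * R1 c k z) *
      (((2 : ℕ) : ℂ) * R c k z ^ (2 - 1) * R1 c k z)) / (R c k z ^ 2) ^ 2

def W0 (c : ℂ) (k n : ℤ) (z : ℂ) : ℂ := Q c k z ^ n
def W1 (c : ℂ) (k n : ℤ) (z : ℂ) : ℂ := (n : ℂ) * (M c k z * W0 c k n z)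
def W2 (c : ℂ) (k n : ℤ) (z : ℂ) : ℂ :=
  (n : ℂ) * (M1 c k z * W0 c k n z + M c k z * W1 c k n z)
def W3 (c : ℂ) (k n : ℤ) (z : ℂ) : ℂ :=
  (n : ℂ) * ((M2 c k z * W0 c k n z + M1 c k z * W1 c k n z) +
    (M1 c k z * W1 c k n z + M c k z * W2 c k n z))

variable {c : ℂ} {k n : ℤ} {z : ℂ}

section pointwise

theorem hdA (hz : z ≠ 0) : HasDerivAt (A c k) (A1 k z) z :=
  (hasDerivAt_zpow k z (Or.inl hz)).const_add c

theorem hdA1 (hz : z ≠ 0) : HasDerivAt (A1 k) (A2 k z) z :=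
  (hasDerivAt_zpow (k - 1) z (Or.inl hz)).const_mul (k : ℂ)

theorem hdA2 (hz : z ≠ 0) : HasDerivAt (A2 k) (A3 k z) z :=
  ((hasDerivAt_zpow (k - 1 - 1) z (Or.inl hz)).const_mul ((k - 1 : ℤ) : ℂ)).const_mul (k : ℂ)

theorem hdP (hz : z ≠ 0) : HasDerivAt (P c k) (P1 c k z) z :=
  ((hdA1 hz).mul (hdA hz)).sub ((hdA hz).mul (hdA1 hz))

theorem hdP1 (hz : z ≠ 0) : HasDerivAt (P1 c k) (P2 c k z) z :=
  (((hdA2 hz).mul (hdA hz)).add ((hdA1 hz).mul (hdA1 hz))).sub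
    (((hdA1 hz).mul (hdA1 hz)).add ((hdA hz).mul (hdA2 hz)))

theorem hdR (hz : z ≠ 0) : HasDerivAt (R c k) (R1 c k z) z :=
  (hdA hz).mul (hdA hz)

theorem hdR1 (hz : z ≠ 0) : HasDerivAt (R1 c k) (R2 c k z) z :=
  ((hdA1 hz).mul (hdA hz)).add ((hdA hz).mul (hdA1 hz))

theorem hR_ne (hA : A c k z ≠ 0) (hB : A c (-k) z ≠ 0) : R c k z ≠ 0 := mul_ne_zero hA hB

theorem hdM (hz : z ≠ 0) (hA : A c k z ≠ 0) (hB : A c (-k) z ≠ 0) : HasDerivAt (M c k) (M1 c k z) z :=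
  (hdP hz).div (hdR hz) (hR_ne hA hB)

theorem hdM1 (hz : z ≠ 0) (hA : A c k z ≠ 0) (hB : A c (-k) z ≠ 0) : HasDerivAt (M1 c k) (M2 c k z) z :=
  (((hdP1 hz).mul (hdR hz)).sub ((hdP hz).mul (hdR1 hz))).div
    ((hdR hz).pow 2) (pow_ne_zero 2 (hR_ne hA hB))

theorem hQ_ne (hA : A c k z ≠ 0) (hB : A c (-k) z ≠ 0) : Q c k z ≠ 0 := div_ne_zero hA hB

theorem hdQ (hz : z ≠ 0) (hB : A c (-k) z ≠ 0) : HasDerivAt (Q c k) (P c k z / A c (-k) z ^ 2) z :=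
  (hdA hz).div (hdA hz) hB

theorem hdW0 (hz : z ≠ 0) (hA : A c k z ≠ 0) (hB : A c (-k) z ≠ 0) : HasDerivAt (W0 c k n) (W1 c k n z) z := by
  have h := (hasDerivAt_zpow n (Q c k z) (Or.inl (hQ_ne hA hB))).comp z (hdQ hz hB)
  have key : (n : ℂ) * Q c k z ^ (n - 1) * (P c k z / A c (-k) z ^ 2) = W1 c k n z := by
    rw [W1, W0, zpow_sub_one₀ (hQ_ne hA hB), M, R]
    generalize Q c k z ^ n = t
    rw [Q]
    field_simp
  rw [key] at h
  exact h

theorem hdW1 (hz : z ≠ 0) (hA : A c k z ≠ 0) (hB : A c (-k) z ≠ 0) : HasDerivAt (W1 c k n) (W2 c k n z) z :=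
  ((hdM hz hA hB).mul (hdW0 hz hA hB)).const_mul (n : ℂ)

theorem hdW2 (hz : z ≠ 0) (hA : A c k z ≠ 0) (hB : A c (-k) z ≠ 0) : HasDerivAt (W2 c k n) (W3 c k n z) z :=
  (((hdM1 hz hA hB).mul (hdW0 hz hA hB)).add
    ((hdM hz hA hB).mul (hdW1 hz hA hB))).const_mul (n : ℂ)

end pointwise

theorem eventually_conds (hc1 : c + 1 ≠ 0) :
    ∀ᶠ z in nhds (1 : ℂ), z ≠ 0 ∧ A c k z ≠ 0 ∧ A c (-k) z ≠ 0 := by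
  have h0 : ∀ᶠ z in nhds (1 : ℂ), z ≠ 0 := eventually_ne_nhds one_ne_zero
  have hAc : ∀ j : ℤ, ∀ᶠ z in nhds (1 : ℂ), A c j z ≠ 0 := by
    intro j
    have hcont : ContinuousAt (A c j) 1 :=
      (continuousAt_const.add (continuousAt_zpow₀ (1 : ℂ) j (Or.inl one_ne_zero)))
    have hval : A c j 1 ≠ 0 := by simpa [A] using hc1
    exact hcont.eventually_ne hval
  filter_upwards [h0, hAc k, hAc (-k)] with z h1 h2 h3 using ⟨h1, h2, h3⟩

theorem iteratedDeriv_three (hc1 : c + 1 ≠ 0) :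
    iteratedDeriv 3 (W0 c k n) 1 = W3 c k n 1 := by
  have hev := eventually_conds (c := c) (k := k) hc1
  have h01 : deriv (W0 c k n) =ᶠ[nhds (1 : ℂ)] W1 c k n :=
    hev.mono fun z hz => (hdW0 hz.1 hz.2.1 hz.2.2).deriv
  have h12 : deriv (W1 c k n) =ᶠ[nhds (1 : ℂ)] W2 c k n :=
    hev.mono fun z hz => (hdW1 hz.1 hz.2.1 hz.2.2).deriv
  have h1ne : (1 : ℂ) ≠ 0 := one_ne_zero
  have hA1 : A c k 1 ≠ 0 := by simpa [A] using hc1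
  have hB1 : A c (-k) 1 ≠ 0 := by simpa [A] using hc1
  have h23 : deriv (W2 c k n) 1 = W3 c k n 1 := (hdW2 h1ne hA1 hB1).deriv
  have : iteratedDeriv 3 (W0 c k n) = deriv (deriv (deriv (W0 c k n))) := by
    rw [show (3 : ℕ) = 2 + 1 from rfl, iteratedDeriv_succ,
      show (2 : ℕ) = 1 + 1 from rfl, iteratedDeriv_succ, iteratedDeriv_one]
  rw [this]
  calc deriv (deriv (deriv (W0 c k n))) 1
      = deriv (deriv (W1 c k n)) 1 := (h01.deriv.deriv).eq_of_nhds
    _ = deriv (W2 c k n) 1 := (h12.deriv).eq_of_nhds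
    _ = W3 c k n 1 := h23

theorem A_one : A c k 1 = c + 1 := by simp [A]
theorem A1_one : A1 k 1 = (k : ℂ) := by simp [A1]
theorem A2_one : A2 k 1 = (k : ℂ) * ((k : ℂ) - 1) := by simp [A2]
theorem A3_one : A3 k 1 = (k : ℂ) * (((k : ℂ) - 1) * ((k : ℂ) - 2)) := by
  rw [A3, one_zpow]; push_cast; ring

theorem P_one : P c k 1 = 2 * k * (c + 1) := by
  simp [P, A_one, A1_one]; push_cast; ring
theorem P1_one : P1 c k 1 = -2 * k * (c + 1) := by
  simp [P1, A_one, A1_one, A2_one]; push_cast; ring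
theorem P2_one : P2 c k 1 = (c + 1) * k * (2 * (k:ℂ) ^ 2 + 4) - 2 * (k:ℂ) ^ 3 := by
  simp [P2, A_one, A1_one, A2_one, A3_one]; push_cast; ring
theorem R_one : R c k 1 = (c + 1) ^ 2 := by simp [R, A_one]; ring
theorem R1_one : R1 c k 1 = 0 := by simp [R1, A_one, A1_one]; push_cast; ring
theorem R2_one : R2 c k 1 = 2 * (k:ℂ) ^ 2 * c := by
  simp [R2, A_one, A1_one, A2_one]; push_cast; ring

theorem M_one (hc1 : c + 1 ≠ 0) : M c k 1 = 2 * k / (c + 1) := by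
  rw [M, P_one, R_one]; field_simp
theorem M1_one (hc1 : c + 1 ≠ 0) : M1 c k 1 = -2 * k / (c + 1) := by
  rw [M1, P1_one, P_one, R_one, R1_one]; field_simp; ring
theorem M2_one (hc1 : c + 1 ≠ 0) :
    M2 c k 1 = ((c + 1) * k * (2 * (k:ℂ) ^ 2 + 4) - 2 * (k:ℂ) ^ 3) / (c + 1) ^ 2
      - 4 * (k:ℂ) ^ 3 * c / (c + 1) ^ 3 := by
  rw [M2, P2_one, P1_one, P_one, R_one, R1_one, R2_one]; field_simp; ring

theorem Q_one (hc1 : c + 1 ≠ 0) : Q c k 1 = 1 := by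
  rw [Q, A_one, A_one, div_self hc1]
theorem W0_one (hc1 : c + 1 ≠ 0) : W0 c k n 1 = 1 := by
  rw [W0, Q_one hc1, one_zpow]
theorem W1_one (hc1 : c + 1 ≠ 0) : W1 c k n 1 = (n : ℂ) * M c k 1 := by
  rw [W1, W0_one hc1, mul_one]
theorem W2_one (hc1 : c + 1 ≠ 0) :
    W2 c k n 1 = (n : ℂ) * M1 c k 1 + (n : ℂ) ^ 2 * M c k 1 ^ 2 := by
  rw [W2, W0_one hc1, W1_one hc1]; ring
theorem W3_one (hc1 : c + 1 ≠ 0) :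
    W3 c k n 1 = (n : ℂ) * M2 c k 1 + 3 * (n : ℂ) ^ 2 * M c k 1 * M1 c k 1
      + (n : ℂ) ^ 3 * M c k 1 ^ 3 := by
  rw [W3, W0_one hc1, W1_one hc1, W2_one hc1]; ring

theorem W3_one' (hc1 : c + 1 ≠ 0) :
    W3 c k n 1 = ((n : ℂ) * ((c + 1) ^ 2 * (2 * (k:ℂ) ^ 3 + 4 * (k:ℂ))
        - 2 * (k:ℂ) ^ 3 * (c + 1) - 4 * (k:ℂ) ^ 3 * c)
      - 12 * (n : ℂ) ^ 2 * (k:ℂ) ^ 2 * (c + 1) + 8 * (n : ℂ) ^ 3 * (k:ℂ) ^ 3) / (c + 1) ^ 3 := by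
  rw [W3_one hc1, M2_one hc1, M1_one hc1, M_one hc1]
  have e1 : (n : ℂ) * (((c + 1) * k * (2 * (k:ℂ) ^ 2 + 4) - 2 * (k:ℂ) ^ 3) / (c + 1) ^ 2
        - 4 * (k:ℂ) ^ 3 * c / (c + 1) ^ 3)
      = ((n : ℂ) * ((c + 1) ^ 2 * (2 * (k:ℂ) ^ 3 + 4 * (k:ℂ))
        - 2 * (k:ℂ) ^ 3 * (c + 1) - 4 * (k:ℂ) ^ 3 * c)) / (c + 1) ^ 3 := by
    field_simp
  have e2 : 3 * (n : ℂ) ^ 2 * (2 * (k:ℂ) / (c + 1)) * (-2 * (k:ℂ) / (c + 1))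
      = (-12 * (n : ℂ) ^ 2 * (k:ℂ) ^ 2 * (c + 1)) / (c + 1) ^ 3 := by
    field_simp; ring
  have e3 : (n : ℂ) ^ 3 * (2 * (k:ℂ) / (c + 1)) ^ 3
      = (8 * (n : ℂ) ^ 3 * (k:ℂ) ^ 3) / (c + 1) ^ 3 := by
    field_simp; ring
  rw [e1, e2, e3, ← add_div, ← add_div]
  ring_nf

theorem diff_value (hc1 : c + 1 ≠ 0) (m m' : ℤ) :
    W3 c m (2 * m') 1 - W3 c m' (2 * m) 1
      = -(4 * c * (c - 1)) / (c + 1) ^ 3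
        * (((m' : ℂ) ^ 2 - (m : ℂ) ^ 2) * (m : ℂ) * (m' : ℂ)) := by
  rw [W3_one' hc1, W3_one' hc1, div_sub_div_same, div_mul_eq_mul_div,
    div_eq_div_iff (pow_ne_zero 3 hc1) (pow_ne_zero 3 hc1)]
  push_cast
  ring

end

end TDD

/-- For nonzero integers `m ≠ m'` with `|m| ≠ |m'|` and real `c ∉ {−1,0,1}`,
the functions `F(z) = ((c+z^m)/(c+z^{−m}))^{2m'}` and
`G(z) = ((c+z^{m'})/(c+z^{−m'}))^{2m}` are not identically equal; indeed
`(F''' − G''')(1) = −4c(c−1)/(c+1)³ · (m'² − m²) m m' ≠ 0`. -/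
theorem third_derivative_distinguishes (m m' : ℤ) (c : ℝ)
    (hm : m ≠ 0) (hm' : m' ≠ 0) (hmm' : m ≠ m') (habs : |m| ≠ |m'|)
    (hc : c ≠ -1 ∧ c ≠ 0 ∧ c ≠ 1)
    (F G : ℂ → ℂ)
    (hF : F = fun z : ℂ => (((c : ℂ) + z ^ m) / ((c : ℂ) + z ^ (-m))) ^ (2 * m'))
    (hG : G = fun z : ℂ => (((c : ℂ) + z ^ m') / ((c : ℂ) + z ^ (-m'))) ^ (2 * m)) :
    iteratedDeriv 3 F 1 - iteratedDeriv 3 G 1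
      = -(4 * (c : ℂ) * ((c : ℂ) - 1)) / ((c : ℂ) + 1) ^ 3
        * (((m' : ℂ) ^ 2 - (m : ℂ) ^ 2) * (m : ℂ) * (m' : ℂ)) ∧
    iteratedDeriv 3 F 1 - iteratedDeriv 3 G 1 ≠ 0 ∧
    F ≠ G := by
  obtain ⟨hc1, hc0, hcI⟩ := hc
  have hc1' : (c : ℂ) + 1 ≠ 0 := by
    have h : c + 1 ≠ 0 := fun h => hc1 (by linarith)
    simpa using Complex.ofReal_ne_zero.mpr h
  have hFd : iteratedDeriv 3 F 1 = TDD.W3 (c : ℂ) m (2 * m') 1 := by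
    rw [hF]; exact TDD.iteratedDeriv_three hc1'
  have hGd : iteratedDeriv 3 G 1 = TDD.W3 (c : ℂ) m' (2 * m) 1 := by
    rw [hG]; exact TDD.iteratedDeriv_three hc1'
  have hval : iteratedDeriv 3 F 1 - iteratedDeriv 3 G 1
      = -(4 * (c : ℂ) * ((c : ℂ) - 1)) / ((c : ℂ) + 1) ^ 3
        * (((m' : ℂ) ^ 2 - (m : ℂ) ^ 2) * (m : ℂ) * (m' : ℂ)) := by
    rw [hFd, hGd]; exact TDD.diff_value hc1' m m'
  have hsq : m ^ 2 ≠ m' ^ 2 := fun h => habs ((sq_eq_sq_iff_abs_eq_abs m m').mp h)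
  have hsqC : ((m' : ℂ) ^ 2 - (m : ℂ) ^ 2) ≠ 0 := by
    have : ((m' ^ 2 - m ^ 2 : ℤ) : ℂ) ≠ 0 :=
      Int.cast_ne_zero.mpr (sub_ne_zero.mpr (Ne.symm hsq))
    push_cast at this
    exact this
  have hne : iteratedDeriv 3 F 1 - iteratedDeriv 3 G 1 ≠ 0 := by
    rw [hval]
    apply mul_ne_zero
    · apply div_ne_zero
      · simp only [neg_ne_zero]
        exact mul_ne_zero (mul_ne_zero (by norm_num : (4:ℂ) ≠ 0) (Complex.ofReal_ne_zero.mpr hc0))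
          (sub_ne_zero.mpr (by exact_mod_cast hcI))
      · exact pow_ne_zero 3 hc1'
    · exact mul_ne_zero (mul_ne_zero hsqC (Int.cast_ne_zero.mpr hm)) (Int.cast_ne_zero.mpr hm')
  refine ⟨hval, hne, fun hEq => hne ?_⟩
  rw [hEq, sub_self]
end
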